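/- arXiv:math/0503003 — 5 statements merged into one kernel-verified Lean document; each statement's English description precedes it below -/
import Mathlib

section
/- For every integer l > 1, the cuspidal subspace S₄(l) is spanned by the classes of the symbols xy(u,v): each class xy(u,v) with gcd(u,v,l) = 1 lies in S₄(l), and every element of S₄(l) is a ℂ-linear combination of the classes xy(u,v) over pairs (u,v) ∈ (ℤ/lℤ)² with gcd(u,v,l) = 1. -/
open scoped BigOperators

namespace MW

variable (l : ℕ)

/-- Index type for the basis symbols: `0 ↦ x²`, `1 ↦ xy`, `2 ↦ y²`. -/
abbrev Sym := Fin 3 × ZMod l × ZMod l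

/-- The free ℂ-vector space on the symbols. -/
abbrev V := Sym l →₀ ℂ

/-- `gcd(u,v,l) = 1`. -/
def copr (u v : ZMod l) : Prop := Nat.gcd (Nat.gcd (ZMod.val u) (ZMod.val v)) l = 1

instance (u v : ZMod l) : Decidable (copr l u v) := by unfold copr; infer_instance

noncomputable def X2 (u v : ZMod l) : V l := Finsupp.single (0, u, v) 1
noncomputable def XY (u v : ZMod l) : V l := Finsupp.single (1, u, v) 1
noncomputable def Y2 (u v : ZMod l) : V l := Finsupp.single (2, u, v) 1

/-- The relation subspace: the relations of Merel–Shokurov on coprime symbols,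
together with the (dummy) basis vectors at non-coprime indices. -/
noncomputable def Rel : Submodule ℂ (V l) :=
  Submodule.span ℂ
    ({ w | ∃ u v, ¬ copr l u v ∧ (w = X2 l u v ∨ w = XY l u v ∨ w = Y2 l u v) } ∪
     { w | ∃ u v, copr l u v ∧
        (w = X2 l u v + Y2 l v (-u) ∨
         w = XY l u v - XY l v (-u) ∨
         w = Y2 l u v + X2 l v (-u) ∨
         w = XY l v (-u - v) - XY l (-u - v) u + Y2 l (-u - v) u + X2 l u v - XY l u v) })

/-- The space of weight four modular symbols of level `l`. -/
abbrev M := V l ⧸ Rel l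

noncomputable def x2 (u v : ZMod l) : M l := Submodule.Quotient.mk (X2 l u v)
noncomputable def xy (u v : ZMod l) : M l := Submodule.Quotient.mk (XY l u v)
noncomputable def y2 (u v : ZMod l) : M l := Submodule.Quotient.mk (Y2 l u v)

/-- The class of `p₂·x²(u,v) + p₁·xy(u,v) + p₀·y²(u,v)` in `M l`. -/
noncomputable def pcl (p2 p1 p0 : ℂ) (u v : ZMod l) : M l :=
  p2 • x2 l u v + p1 • xy l u v + p0 • y2 l u v

/-- Reduction `ZMod l → ZMod (gcd(a,l))`. -/
noncomputable def castg (a : ZMod l) : ZMod l →+* ZMod (Nat.gcd (ZMod.val a) l) :=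
  ZMod.castHom (Nat.gcd_dvd_right (ZMod.val a) l) (ZMod (Nat.gcd (ZMod.val a) l))

/-- The functional on `V l` attached to the cusp data `(a, b)`. -/
noncomputable def psiV (a : ZMod l) (b : ZMod (Nat.gcd (ZMod.val a) l)) : V l →ₗ[ℂ] ℂ :=
  Finsupp.lift ℂ ℂ (Sym l) fun p =>
    if copr l p.2.1 p.2.2 then
      (if p.1 = 0 then
        ((if p.2.1 = a ∧ castg l a p.2.2 = b then (1 : ℂ) else 0) +
         (if p.2.1 = -a ∧ castg l a p.2.2 = -b then (1 : ℂ) else 0))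
       else if p.1 = 2 then
        (-(if p.2.2 = a ∧ castg l a p.2.1 = -b then (1 : ℂ) else 0) -
          (if p.2.2 = -a ∧ castg l a p.2.1 = b then (1 : ℂ) else 0))
       else 0)
    else 0

/-- The cuspidal subspace `S₄(l) ⊆ M₄(l)`: the (image in `M l` of the) intersection
of the kernels of all the functionals `ψ_{(a,b)}`. -/
noncomputable def S : Submodule ℂ (M l) :=
  Submodule.map (Rel l).mkQ
    (⨅ (a : ZMod l), ⨅ (b : ZMod (Nat.gcd (ZMod.val a) l)), ⨅ (_ : IsUnit b),
      LinearMap.ker (psiV l a b))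

/-!
The functionals `ψ_{(a,b)}` are the coordinates of a boundary map `δ` to formal combinations of
pairs `(a, b)`: `δ x²(u,v) = [u, v mod gcd(u,l)] + [-u, -v mod gcd(u,l)]`, `δ xy(u,v) = 0` and
`δ y²(u,v) = -δ x²(v,-u)`. Modulo the span of the `xy` symbols the relations give
`x²(u,v) = x²(-u,-v) = -y²(v,-u)` and `x²(u,v+u) = x²(u,v)`; by Bezout the latter means that the
class of `x²(u,v)` depends only on `u` and `v mod gcd(u,l)`. Hence sending a pair `(a, b)` with `b`
a unit to half the class of `x²(a,b)` inverts `δ` modulo `xy`, so whatever all the `ψ_{(a,b)}`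
kill lies in the span of the `xy` symbols.
-/
variable {l}

section Coprimality

variable [NeZero l] {u v : ZMod l}

instance (a : ZMod l) : NeZero (Nat.gcd a.val l) := ⟨Nat.gcd_ne_zero_right (NeZero.ne l)⟩

lemma copr_iff_isCoprime : copr l u v ↔ IsCoprime u v := by
  set g := Nat.gcd u.val v.val
  have hu : u = g * ((u.val / g : ℕ) : ZMod l) := by
    rw [← Nat.cast_mul, Nat.mul_div_cancel' (Nat.gcd_dvd_left _ _), ZMod.natCast_zmod_val]
  have hv : v = g * ((v.val / g : ℕ) : ZMod l) := by
    rw [← Nat.cast_mul, Nat.mul_div_cancel' (Nat.gcd_dvd_right _ _), ZMod.natCast_zmod_val]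
  have hg : (g : ZMod l) = u * (Nat.gcdA u.val v.val : ZMod l) + v * Nat.gcdB u.val v.val := by
    have := congrArg (Int.cast : ℤ → ZMod l) (Nat.gcd_eq_gcd_ab u.val v.val)
    push_cast [ZMod.natCast_zmod_val] at this
    exact this
  rw [copr, ← Nat.Coprime, ← ZMod.isUnit_iff_coprime]
  constructor
  · intro hunit
    obtain ⟨c, hc⟩ := hunit.exists_right_inv
    exact ⟨Nat.gcdA u.val v.val * c, Nat.gcdB u.val v.val * c,
      by linear_combination -c * hg + hc⟩
  · intro h
    rw [hu, hv] at h
    exact isCoprime_self.mp h.of_mul_left_left.of_mul_right_left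

lemma copr_neg_neg (h : copr l u v) : copr l (-u) (-v) :=
  copr_iff_isCoprime.mpr (copr_iff_isCoprime.mp h).neg_neg

lemma copr_swap_neg (h : copr l u v) : copr l v (-u) :=
  copr_iff_isCoprime.mpr (copr_iff_isCoprime.mp h).symm.neg_right

lemma isUnit_castg_iff : IsUnit (castg l u v) ↔ copr l u v := by
  rw [castg, ZMod.castHom_apply, ← ZMod.natCast_val, ZMod.isUnit_iff_coprime, copr, Nat.Coprime,
    Nat.gcd_comm u.val v.val, Nat.gcd_assoc]

lemma castg_natCast_val (u v : ZMod l) : castg l u ((castg l u v).val : ZMod l) = castg l u v := by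
  rw [map_natCast, ZMod.natCast_zmod_val]

lemma exists_eq_mul_of_castg_eq_zero {x : ZMod l} (h : castg l u x = 0) : ∃ c, x = c * u := by
  rw [castg, ZMod.castHom_apply, ← ZMod.natCast_val, ZMod.natCast_eq_zero_iff] at h
  obtain ⟨m, hm⟩ := h
  have hg : ((Nat.gcd u.val l : ℕ) : ZMod l) = u * Nat.gcdA u.val l := by
    have := congrArg (Int.cast : ℤ → ZMod l) (Nat.gcd_eq_gcd_ab u.val l)
    push_cast [ZMod.natCast_zmod_val, ZMod.natCast_self] at this
    simpa using this
  refine ⟨Nat.gcdA u.val l * m, ?_⟩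
  rw [← ZMod.natCast_zmod_val x, hm, Nat.cast_mul, hg]
  ring

end Coprimality

section Relations

variable {u v : ZMod l}

lemma x2_add_y2 (h : copr l u v) : x2 l u v + y2 l v (-u) = 0 := by
  rw [x2, y2, ← Submodule.Quotient.mk_add, Submodule.Quotient.mk_eq_zero]
  exact Submodule.subset_span (Or.inr ⟨u, v, h, Or.inl rfl⟩)

lemma y2_add_x2 (h : copr l u v) : y2 l u v + x2 l v (-u) = 0 := by
  rw [x2, y2, ← Submodule.Quotient.mk_add, Submodule.Quotient.mk_eq_zero]
  exact Submodule.subset_span (Or.inr ⟨u, v, h, Or.inr (Or.inr (Or.inl rfl))⟩)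

lemma three_term_relation (h : copr l u v) :
    xy l v (-u - v) - xy l (-u - v) u + y2 l (-u - v) u + x2 l u v - xy l u v = 0 := by
  simp only [x2, xy, y2, ← Submodule.Quotient.mk_add, ← Submodule.Quotient.mk_sub,
    Submodule.Quotient.mk_eq_zero]
  exact Submodule.subset_span (Or.inr ⟨u, v, h, Or.inr (Or.inr (Or.inr rfl))⟩)

lemma mk_single_of_not_copr (h : ¬ copr l u v) (i : Fin 3) :
    (Submodule.Quotient.mk (Finsupp.single (i, u, v) 1) : M l) = 0 := by
  rw [Submodule.Quotient.mk_eq_zero]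
  refine Submodule.subset_span (Or.inl ⟨u, v, h, ?_⟩)
  fin_cases i
  exacts [Or.inl rfl, Or.inr (Or.inl rfl), Or.inr (Or.inr rfl)]

lemma x2_neg_neg [NeZero l] (h : copr l u v) : x2 l (-u) (-v) = x2 l u v := by
  linear_combination (norm := module) y2_add_x2 (copr_swap_neg h) - x2_add_y2 h

end Relations

variable (l) in
noncomputable def xySpan : Submodule ℂ (M l) :=
  Submodule.span ℂ {t : M l | ∃ u v : ZMod l, copr l u v ∧ t = xy l u v}

section QuotientByXY

variable {u v : ZMod l}

lemma mkQ_xy (u v : ZMod l) : (xySpan l).mkQ (xy l u v) = 0 := by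
  by_cases h : copr l u v
  · exact (Submodule.Quotient.mk_eq_zero _).mpr (Submodule.subset_span ⟨u, v, h, rfl⟩)
  · rw [xy, XY, mk_single_of_not_copr h, map_zero]

lemma mkQ_y2 (h : copr l u v) : (xySpan l).mkQ (y2 l u v) = -(xySpan l).mkQ (x2 l v (-u)) := by
  rw [← map_neg, eq_neg_of_add_eq_zero_left (y2_add_x2 h)]

variable [NeZero l]

lemma mkQ_x2_add_self (h : copr l u v) :
    (xySpan l).mkQ (x2 l u (v + u)) = (xySpan l).mkQ (x2 l u v) := by
  have h' : copr l (-u - v) u := by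
    obtain ⟨a, b, hab⟩ := copr_iff_isCoprime.mp h
    exact copr_iff_isCoprime.mpr ⟨-b, a - b, by linear_combination hab⟩
  have := congrArg (xySpan l).mkQ (three_term_relation h)
  simp only [map_add, map_sub, map_zero, mkQ_xy, mkQ_y2 h', show -(-u - v) = v + u by ring] at this
  linear_combination (norm := module) -this

lemma mkQ_x2_add_mul (h : copr l u v) (c : ZMod l) :
    (xySpan l).mkQ (x2 l u (v + c * u)) = (xySpan l).mkQ (x2 l u v) := by
  obtain ⟨n, rfl⟩ : ∃ n : ℕ, (n : ZMod l) = c := ⟨c.val, ZMod.natCast_zmod_val c⟩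
  induction n with
  | zero => simp
  | succ n ih =>
    have hn : copr l u (v + n * u) := copr_iff_isCoprime.mpr <| by
      simpa [mul_comm] using (copr_iff_isCoprime.mp h).add_mul_left_right (n : ZMod l)
    rw [Nat.cast_succ, add_one_mul, ← add_assoc, mkQ_x2_add_self hn, ih]

lemma mkQ_x2_congr {v' : ZMod l} (h : copr l u v) (hv : castg l u v = castg l u v') :
    (xySpan l).mkQ (x2 l u v) = (xySpan l).mkQ (x2 l u v') := by
  obtain ⟨c, hc⟩ := exists_eq_mul_of_castg_eq_zero (x := v' - v) (by rw [map_sub, hv, sub_self])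
  rw [show v' = v + c * u by linear_combination hc, mkQ_x2_add_mul h]

end QuotientByXY

variable (l) in
abbrev CuspIdx := Σ a : ZMod l, ZMod (Nat.gcd a.val l)

lemma sigma_mk_castg_eq_iff {u v a : ZMod l} {b : ZMod (Nat.gcd a.val l)} :
    (⟨u, castg l u v⟩ : CuspIdx l) = ⟨a, b⟩ ↔ u = a ∧ castg l a v = b := by
  constructor
  · rintro ⟨⟩
    exact ⟨rfl, rfl⟩
  · rintro ⟨rfl, rfl⟩
    rfl

variable (l) in
noncomputable def boundarySym : Sym l → CuspIdx l →₀ ℂ := fun ⟨i, u, v⟩ =>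
  if copr l u v then
    ![Finsupp.single ⟨u, castg l u v⟩ 1 + Finsupp.single ⟨-u, castg l (-u) (-v)⟩ 1, 0,
      -Finsupp.single ⟨v, castg l v (-u)⟩ 1 - Finsupp.single ⟨-v, castg l (-v) u⟩ 1] i
  else 0

variable (l) in
noncomputable def boundary : V l →ₗ[ℂ] CuspIdx l →₀ ℂ :=
  Finsupp.linearCombination ℂ (boundarySym l)

lemma boundary_apply (w : V l) (a : ZMod l) (b : ZMod (Nat.gcd a.val l)) :
    boundary l w ⟨a, b⟩ = psiV l a b w := by
  suffices (Finsupp.lapply ⟨a, b⟩).comp (boundary l) = psiV l a b from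
    LinearMap.congr_fun this w
  refine Finsupp.lhom_ext' fun ⟨i, u, v⟩ => LinearMap.ext_ring ?_
  simp only [LinearMap.comp_apply, Finsupp.lsingle_apply, Finsupp.lapply_apply, boundary,
    Finsupp.linearCombination_single, one_smul, boundarySym, psiV, Finsupp.lift_apply,
    Finsupp.sum_single_index, zero_smul]
  by_cases h : copr l u v
  · fin_cases i <;>
      simp only [h, if_true, Fin.isValue, Fin.zero_eta, Fin.mk_one, Fin.reduceFinMk,
        Matrix.cons_val, Finsupp.coe_add, Finsupp.coe_sub, Finsupp.coe_neg, Pi.add_apply,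
        Pi.sub_apply, Pi.neg_apply,
        Finsupp.single_apply, sigma_mk_castg_eq_iff] <;>
      simp [neg_eq_iff_eq_neg]
  · simp only [h, if_false, Finsupp.coe_zero, Pi.zero_apply]

lemma psiV_XY (a : ZMod l) (b : ZMod (Nat.gcd a.val l)) (u v : ZMod l) :
    psiV l a b (XY l u v) = 0 := by
  simp [psiV, XY, Finsupp.lift_apply]

open Classical in
variable (l) in
noncomputable def cuspClass (c : CuspIdx l) : M l ⧸ xySpan l :=
  if IsUnit c.2 then (xySpan l).mkQ (x2 l c.1 (c.2.val : ZMod l)) else 0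

variable (l) in
noncomputable def cuspLift : (CuspIdx l →₀ ℂ) →ₗ[ℂ] M l ⧸ xySpan l :=
  Finsupp.linearCombination ℂ fun c => (2⁻¹ : ℂ) • cuspClass l c

section CuspLift

variable [NeZero l]

lemma cuspClass_mk_castg {u v : ZMod l} (h : copr l u v) :
    cuspClass l ⟨u, castg l u v⟩ = (xySpan l).mkQ (x2 l u v) := by
  have hlift : copr l u ((castg l u v).val : ZMod l) := by
    rw [← isUnit_castg_iff, castg_natCast_val, isUnit_castg_iff]
    exact h
  rw [cuspClass, if_pos (isUnit_castg_iff.mpr h)]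
  exact mkQ_x2_congr hlift (castg_natCast_val u v)

lemma cuspLift_boundary (w : V l) :
    cuspLift l (boundary l w) = (xySpan l).mkQ ((Rel l).mkQ w) := by
  suffices (cuspLift l).comp (boundary l) = (xySpan l).mkQ.comp (Rel l).mkQ from
    LinearMap.congr_fun this w
  refine Finsupp.lhom_ext' fun ⟨i, u, v⟩ => LinearMap.ext_ring ?_
  simp only [LinearMap.comp_apply, Finsupp.lsingle_apply, boundary,
    Finsupp.linearCombination_single, one_smul, boundarySym, cuspLift]
  by_cases h : copr l u v
  · fin_cases i <;>
      simp only [h, if_true, Fin.isValue, Fin.zero_eta, Fin.mk_one, Fin.reduceFinMk,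
        Matrix.cons_val, map_add, map_sub, LinearMap.map_neg, map_zero,
        Finsupp.linearCombination_single, one_smul]
    · rw [cuspClass_mk_castg h, cuspClass_mk_castg (copr_neg_neg h), x2_neg_neg h]
      change _ = (xySpan l).mkQ (x2 l u v)
      module
    · exact (mkQ_xy u v).symm
    · have hvu := copr_swap_neg h
      have hx : x2 l (-v) u = x2 l v (-u) := by simpa using x2_neg_neg hvu
      rw [cuspClass_mk_castg hvu, cuspClass_mk_castg (by simpa using copr_neg_neg hvu), hx]
      change _ = (xySpan l).mkQ (y2 l u v)
      rw [mkQ_y2 h]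
      module
  · simp only [h, if_false, map_zero, Submodule.mkQ_apply, mk_single_of_not_copr h]

lemma cuspLift_boundary_eq_zero {w : V l}
    (hw : ∀ (a : ZMod l) (b : ZMod (Nat.gcd a.val l)), IsUnit b → psiV l a b w = 0) :
    cuspLift l (boundary l w) = 0 := by
  rw [cuspLift, Finsupp.linearCombination_apply]
  refine Finset.sum_eq_zero fun ⟨a, b⟩ _ => ?_
  by_cases hb : IsUnit b
  · simp only [boundary_apply, hw a b hb, zero_smul]
  · simp only [cuspClass, if_neg hb, smul_zero]

end CuspLift

end MW

open MW in
theorem stmt0 (l : ℕ) (hl : 1 < l) :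
    (∀ u v : ZMod l, copr l u v → xy l u v ∈ S l) ∧
    (∀ m ∈ S l, m ∈ Submodule.span ℂ {t : M l | ∃ u v : ZMod l, copr l u v ∧ t = xy l u v}) := by
  have : NeZero l := ⟨by omega⟩
  refine ⟨fun u v _ => ⟨XY l u v, ?_, rfl⟩, ?_⟩
  · simp only [SetLike.mem_coe, Submodule.mem_iInf, LinearMap.mem_ker]
    exact fun a b _ => psiV_XY a b u v
  · rintro _ ⟨w, hw, rfl⟩
    simp only [SetLike.mem_coe, Submodule.mem_iInf, LinearMap.mem_ker] at hw
    exact (Submodule.Quotient.mk_eq_zero (xySpan l)).mp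
      ((cuspLift_boundary w).symm.trans (cuspLift_boundary_eq_zero hw))
end

section
/- Let l ≥ 1 be an integer and let f, g be modular forms of weight 1 for Γ₁(l). Then the Wronskian W(f,g)(τ) = f′(τ)·g(τ) − g′(τ)·f(τ) (derivatives with respect to τ) is a cusp form of weight 4 for Γ₁(l): it is holomorphic on ℍ, satisfies W(f,g)((pτ+q)/(rτ+t)) = (rτ+t)⁴·W(f,g)(τ) for all (p q; r t) ∈ Γ₁(l), and for every γ = (p q; r t) ∈ SL₂(ℤ) the function (rτ+t)^{−4}·W(f,g)(γ·τ) tends to 0 as Im τ → ∞. -/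
open UpperHalfPlane

/-- Extension by zero of a function on `ℍ` to `ℂ`. -/
noncomputable def extH (f : ℍ → ℂ) : ℂ → ℂ :=
  fun z => if h : 0 < z.im then f ⟨z, h⟩ else 0

/-!
Write `D = (2πi)⁻¹ d/dτ`. For `γ = (a b; c d) ∈ SL(2, ℤ)` and `F` of weight `k`,
`D (F ∣[k] γ) = (D F) ∣[k+2] γ - k c / (2πi (cτ + d)) · (F ∣[k] γ)`, and the correction terms
cancel in `D F · G - D G · F`, so the Wronskian of two weight `k` forms has weight `2k + 2`.
It vanishes at every cusp: by the Cauchy estimate on the disc of radius `Im τ / 2` about `τ`, the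
derivative of a function bounded near `i∞` is `O(1 / Im τ)` there.
-/

open Real Complex Filter Metric ModularForm Derivative
open scoped MatrixGroups Manifold Topology

lemma ModularForm.slash_mapGL (F : ℍ → ℂ) (k : ℤ) (γ : SL(2, ℤ)) :
    F ∣[k] Matrix.SpecialLinearGroup.mapGL ℝ γ = F ∣[k] γ :=
  rfl

namespace UpperHalfPlane

lemma norm_deriv_le_of_norm_le {F : ℍ → ℂ} (hF : MDiff F) {A M : ℝ}
    (hM : ∀ τ : ℍ, A ≤ τ.im → ‖F τ‖ ≤ M) {τ : ℍ} (hτ : 2 * A ≤ τ.im) :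
    ‖deriv (F ∘ ofComplex) τ‖ ≤ 4 * M / τ.im := by
  have hr : 0 < τ.im / 2 := by linarith [τ.im_pos]
  have him_ball : ∀ w ∈ ball (τ : ℂ) (τ.im / 2), τ.im / 2 < w.im := fun w hw => by
    have := (abs_lt.mp ((abs_im_le_norm (w - τ)).trans_lt (mem_ball_iff_norm.mp hw))).1
    rw [sub_im, coe_im] at this
    linarith
  have hd : DifferentiableOn ℂ (F ∘ ofComplex) (ball (τ : ℂ) (τ.im / 2)) := fun w hw =>
    (mdifferentiableAt_iff.mp (hF ⟨w, hr.trans (him_ball w hw)⟩)).differentiableWithinAt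
  have hmaps : Set.MapsTo (F ∘ ofComplex) (ball (τ : ℂ) (τ.im / 2))
      (closedBall ((F ∘ ofComplex) τ) (2 * M)) := fun w hw => by
    have hw := him_ball w hw
    have hw0 : 0 < w.im := hr.trans hw
    rw [mem_closedBall, dist_eq_norm, Function.comp_apply, Function.comp_apply,
      ofComplex_apply_of_im_pos hw0, ofComplex_apply]
    calc ‖F ⟨w, hw0⟩ - F τ‖ ≤ ‖F ⟨w, hw0⟩‖ + ‖F τ‖ := norm_sub_le _ _
      _ ≤ M + M := add_le_add (hM _ (by change A ≤ w.im; linarith)) (hM _ (by linarith))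
      _ = 2 * M := by ring
  calc ‖deriv (F ∘ ofComplex) τ‖ ≤ 2 * M / (τ.im / 2) :=
        norm_deriv_le_div_of_mapsTo_ball hd hmaps hr
    _ = 4 * M / τ.im := by field_simp; ring

lemma isZeroAtImInfty_normalizedDeriv {F : ℍ → ℂ} (hF : MDiff F) (hb : IsBoundedAtImInfty F) :
    IsZeroAtImInfty (D F) := by
  obtain ⟨M, A, hM⟩ := isBoundedAtImInfty_iff.mp hb
  have hbound : ∀ᶠ τ : ℍ in atImInfty, ‖deriv (F ∘ ofComplex) τ‖ ≤ 4 * M / τ.im :=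
    (atImInfty_mem _).mpr ⟨2 * A, fun τ hτ => norm_deriv_le_of_norm_le hF hM hτ⟩
  have hderiv : Tendsto (fun τ : ℍ => deriv (F ∘ ofComplex) τ) atImInfty (𝓝 0) :=
    squeeze_zero_norm' hbound (tendsto_const_nhds.div_atTop tendsto_comap)
  have h := hderiv.const_mul (2 * π * Complex.I)⁻¹
  rwa [mul_zero] at h

noncomputable def wronskian (F G : ℍ → ℂ) : ℍ → ℂ := D F * G - D G * F

lemma mdifferentiable_wronskian {F G : ℍ → ℂ} (hF : MDiff F) (hG : MDiff G) :
    MDiff (wronskian F G) :=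
  ((normalizedDerivOfComplex_mdifferentiable hF).mul hG).sub
    ((normalizedDerivOfComplex_mdifferentiable hG).mul hF)

lemma isZeroAtImInfty_wronskian {F G : ℍ → ℂ} (hF : MDiff F) (hG : MDiff G)
    (hFb : IsBoundedAtImInfty F) (hGb : IsBoundedAtImInfty G) :
    IsZeroAtImInfty (wronskian F G) := by
  have h := ((isZeroAtImInfty_normalizedDeriv hF hFb).mul_boundedAtFilter hGb).sub
    ((isZeroAtImInfty_normalizedDeriv hG hGb).mul_boundedAtFilter hFb)
  rwa [sub_zero] at h

lemma wronskian_SL_slash {F G : ℍ → ℂ} (hF : MDiff F) (hG : MDiff G) (k : ℤ) (γ : SL(2, ℤ)) :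
    wronskian F G ∣[2 * k + 2] γ = wronskian (F ∣[k] γ) (G ∣[k] γ) := by
  rw [show 2 * k + 2 = (k + 2) + k by ring, wronskian, wronskian, sub_eq_add_neg,
    SlashAction.add_slash, SlashAction.neg_slash, mul_slash_SL2, mul_slash_SL2,
    normalizedDerivOfComplex_SL_slash hF, normalizedDerivOfComplex_SL_slash hG]
  ext τ
  simp only [Pi.add_apply, Pi.neg_apply, Pi.sub_apply, Pi.mul_apply]
  ring

lemma isZeroAt_wronskian {F G : ℍ → ℂ} (hF : MDiff F) (hG : MDiff G) {k : ℤ} {c : OnePoint ℝ}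
    (hc : IsCusp c 𝒮ℒ) (hFc : c.IsBoundedAt F k) (hGc : c.IsBoundedAt G k) :
    c.IsZeroAt (wronskian F G) (2 * k + 2) := by
  obtain ⟨γ, rfl⟩ := isCusp_SL2Z_iff'.mp hc
  rw [OnePoint.isBoundedAt_iff rfl, slash_mapGL] at hFc hGc
  rw [OnePoint.isZeroAt_iff rfl, slash_mapGL, wronskian_SL_slash hF hG]
  exact isZeroAtImInfty_wronskian (hF.slash k _) (hG.slash k _) hFc hGc

end UpperHalfPlane

noncomputable def CuspForm.wronskian {Γ : Subgroup SL(2, ℤ)} {k : ℤ} (f g : ModularForm Γ k) :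
    CuspForm Γ (2 * k + 2) where
  toFun := UpperHalfPlane.wronskian f g
  slash_action_eq' γ hγ := by
    obtain ⟨γ, -, rfl⟩ := Subgroup.mem_map.mp hγ
    rw [slash_mapGL, wronskian_SL_slash (ModularFormClass.holo f) (ModularFormClass.holo g),
      ← slash_mapGL, ← slash_mapGL, SlashInvariantForm.slash_action_eqn f _ hγ,
      SlashInvariantForm.slash_action_eqn g _ hγ]
  holo' := mdifferentiable_wronskian (ModularFormClass.holo f) (ModularFormClass.holo g)
  zero_at_cusps' hc :=
    isZeroAt_wronskian (ModularFormClass.holo f) (ModularFormClass.holo g)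
      (hc.mono (Subgroup.map_le_range _ _))
      (ModularFormClass.bdd_at_cusps f hc) (ModularFormClass.bdd_at_cusps g hc)

lemma CuspForm.wronskian_apply {Γ : Subgroup SL(2, ℤ)} {k : ℤ} (f g : ModularForm Γ k) (τ : ℍ) :
    CuspForm.wronskian f g τ = D f τ * g τ - D g τ * f τ :=
  rfl

lemma deriv_extH (F : ℍ → ℂ) (τ : ℍ) : deriv (extH F) τ = 2 * π * Complex.I * D F τ := by
  have hloc : extH F =ᶠ[𝓝 (τ : ℂ)] F ∘ ofComplex := by
    filter_upwards [isOpen_upperHalfPlaneSet.mem_nhds τ.im_pos] with w hw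
    simp [extH, hw, ofComplex_apply_of_im_pos hw]
  rw [hloc.deriv_eq, normalizedDerivOfComplex, ← mul_assoc, mul_inv_cancel₀ two_pi_I_ne_zero,
    one_mul]

theorem stmt12_general (l : ℕ)
    (f g : ModularForm (CongruenceSubgroup.Gamma1 l) 1) :
    ∃ W : CuspForm (CongruenceSubgroup.Gamma1 l) 4,
      ∀ τ : ℍ,
        W τ = deriv (extH f) (τ : ℂ) * g τ - deriv (extH g) (τ : ℂ) * f τ := by
  refine ⟨(2 * π * Complex.I) • CuspForm.wronskian f g, fun τ => ?_⟩
  rw [FunLike.coe_smul, Pi.smul_apply, smul_eq_mul, CuspForm.wronskian_apply, deriv_extH,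
    deriv_extH]
  ring

theorem stmt12 (l : ℕ) (hl : 1 ≤ l)
    (f g : ModularForm (CongruenceSubgroup.Gamma1 l) 1) :
    ∃ W : CuspForm (CongruenceSubgroup.Gamma1 l) 4,
      ∀ τ : ℍ,
        W τ = deriv (extH f) (τ : ℂ) * g τ - deriv (extH g) (τ : ℂ) * f τ :=
  stmt12_general l f g
end

section
/- Let n ≥ 1 be an integer and let A : ℤ × ℤ → ℂ be any function satisfying A(j,k) = A(−j,−k) for all j, k ∈ ℤ. Then Σ_{(m₁,k₁,m₂,k₂) ∈ I(n)} [ (m₂k₂−m₁k₁−2m₁k₂)·A(k₁,k₂) + (m₂k₂−m₁k₁+2k₁m₂)·A(k₂,−k₁−k₂) + (m₁k₁−m₂k₂)·A(−k₁−k₂,k₁) − (m₂k₂−m₁k₁+2m₁k₂)·A(−k₁,k₂) − (m₂k₂−m₁k₁−2k₁m₂)·A(k₂,k₁−k₂) − (m₁k₁−m₂k₂)·A(k₁−k₂,−k₁) ] = Σ_{m₁,k₁,k₂ > 0, m₁(k₁+k₂)=n} ( −n·A(k₁,k₂) + n·A(k₂,−k₁−k₂) + m₁(k₁−k₂)·A(−k₁−k₂,k₁)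 ) − Σ_{m₁,m₂,k₁ > 0, (m₁+m₂)k₁=n} ( n·A(−k₁,k₁) − n·A(k₁,0) + (m₁−m₂)k₁·A(0,−k₁) ). -/
open scoped BigOperators

/-- `I(n)`: the finite set of quadruples `(m₁,k₁,m₂,k₂)` of positive integers
with `m₁k₁ + m₂k₂ = n`. -/
def Iset (n : ℕ) : Finset (ℕ × ℕ × ℕ × ℕ) :=
  ((Finset.range (n + 1)) ×ˢ (Finset.range (n + 1)) ×ˢ (Finset.range (n + 1)) ×ˢ
      (Finset.range (n + 1))).filter
    (fun q => 0 < q.1 ∧ 0 < q.2.1 ∧ 0 < q.2.2.1 ∧ 0 < q.2.2.2 ∧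
      q.1 * q.2.1 + q.2.2.1 * q.2.2.2 = n)

noncomputable def Pfun (A : ℤ → ℤ → ℂ) (q : ℕ × ℕ × ℕ × ℕ) : ℂ :=
  ((q.2.2.1 : ℂ) * q.2.2.2 - q.1 * q.2.1 - 2 * q.1 * q.2.2.2) * A q.2.1 q.2.2.2 +
  ((q.2.2.1 : ℂ) * q.2.2.2 - q.1 * q.2.1 + 2 * q.2.1 * q.2.2.1) *
    A q.2.2.2 (-(q.2.1 : ℤ) - q.2.2.2) +
  ((q.1 : ℂ) * q.2.1 - q.2.2.1 * q.2.2.2) * A (-(q.2.1 : ℤ) - q.2.2.2) q.2.1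

noncomputable def Nfun (A : ℤ → ℤ → ℂ) (q : ℕ × ℕ × ℕ × ℕ) : ℂ :=
  ((q.2.2.1 : ℂ) * q.2.2.2 - q.1 * q.2.1 + 2 * q.1 * q.2.2.2) * A (-(q.2.1 : ℤ)) q.2.2.2 +
  ((q.2.2.1 : ℂ) * q.2.2.2 - q.1 * q.2.1 - 2 * q.2.1 * q.2.2.1) *
    A q.2.2.2 ((q.2.1 : ℤ) - q.2.2.2) +
  ((q.1 : ℂ) * q.2.1 - q.2.2.1 * q.2.2.2) * A ((q.2.1 : ℤ) - q.2.2.2) (-(q.2.1 : ℤ))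

lemma mem_Iset {n : ℕ} {q : ℕ × ℕ × ℕ × ℕ} :
    q ∈ Iset n ↔ 0 < q.1 ∧ 0 < q.2.1 ∧ 0 < q.2.2.1 ∧ 0 < q.2.2.2 ∧
      q.1 * q.2.1 + q.2.2.1 * q.2.2.2 = n := by
  obtain ⟨m1, k1, m2, k2⟩ := q
  simp only [Iset, Finset.mem_filter, Finset.mem_product, Finset.mem_range]
  constructor
  · rintro ⟨-, h⟩; exact h
  · rintro ⟨h1, h2, h3, h4, h5⟩
    refine ⟨⟨?_, ?_, ?_, ?_⟩, h1, h2, h3, h4, h5⟩ <;> nlinarith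

lemma three_split {α : Type*} (s : Finset α) (f : α → ℂ) (a b : α → ℕ) :
    ∑ x ∈ s, f x =
      (∑ x ∈ s.filter (fun x => b x < a x), f x) +
      ((∑ x ∈ s.filter (fun x => a x < b x), f x) +
       (∑ x ∈ s.filter (fun x => a x = b x), f x)) := by
  classical
  rw [← Finset.sum_filter_add_sum_filter_not s (fun x => b x < a x) f]
  congr 1
  rw [← Finset.sum_filter_add_sum_filter_not (s.filter fun x => ¬ b x < a x)
      (fun x => a x < b x) f, Finset.filter_filter, Finset.filter_filter]
  congr 1
  · exact Finset.sum_congr (Finset.filter_congr (fun x _ => by omega)) (fun _ _ => rfl)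
  · exact Finset.sum_congr (Finset.filter_congr (fun x _ => by omega)) (fun _ _ => rfl)

theorem stmt13 (n : ℕ) (hn : 1 ≤ n) (A : ℤ → ℤ → ℂ)
    (hA : ∀ j k : ℤ, A j k = A (-j) (-k)) :
    Finset.sum (Iset n) (fun q : ℕ × ℕ × ℕ × ℕ =>
      let m1 : ℂ := q.1; let k1 : ℂ := q.2.1; let m2 : ℂ := q.2.2.1; let k2 : ℂ := q.2.2.2;
      let K1 : ℤ := q.2.1; let K2 : ℤ := q.2.2.2;
      (m2 * k2 - m1 * k1 - 2 * m1 * k2) * A K1 K2 +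
      (m2 * k2 - m1 * k1 + 2 * k1 * m2) * A K2 (-K1 - K2) +
      (m1 * k1 - m2 * k2) * A (-K1 - K2) K1 -
      (m2 * k2 - m1 * k1 + 2 * m1 * k2) * A (-K1) K2 -
      (m2 * k2 - m1 * k1 - 2 * k1 * m2) * A K2 (K1 - K2) -
      (m1 * k1 - m2 * k2) * A (K1 - K2) (-K1)) =
    Finset.sum
      (((Finset.range (n + 1)) ×ˢ (Finset.range (n + 1)) ×ˢ
          (Finset.range (n + 1))).filter
        (fun t => 0 < t.1 ∧ 0 < t.2.1 ∧ 0 < t.2.2 ∧ t.1 * (t.2.1 + t.2.2) = n))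
      (fun t : ℕ × ℕ × ℕ =>
        let m1 : ℂ := t.1; let k1 : ℂ := t.2.1; let k2 : ℂ := t.2.2;
        let K1 : ℤ := t.2.1; let K2 : ℤ := t.2.2;
        -(n : ℂ) * A K1 K2 + (n : ℂ) * A K2 (-K1 - K2) +
          m1 * (k1 - k2) * A (-K1 - K2) K1) -
    Finset.sum
      (((Finset.range (n + 1)) ×ˢ (Finset.range (n + 1)) ×ˢ
          (Finset.range (n + 1))).filter
        (fun t => 0 < t.1 ∧ 0 < t.2.1 ∧ 0 < t.2.2 ∧ (t.1 + t.2.1) * t.2.2 = n))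
      (fun t : ℕ × ℕ × ℕ =>
        let m1 : ℂ := t.1; let m2 : ℂ := t.2.1; let k1 : ℂ := t.2.2;
        let K1 : ℤ := t.2.2;
        (n : ℂ) * A (-K1) K1 - (n : ℂ) * A K1 0 +
          (m1 - m2) * k1 * A 0 (-K1)) := by
  classical
  -- Step 0: rewrite the LHS summand as `Pfun - Nfun`.
  have e0 : Finset.sum (Iset n) (fun q : ℕ × ℕ × ℕ × ℕ =>
      let m1 : ℂ := q.1; let k1 : ℂ := q.2.1; let m2 : ℂ := q.2.2.1; let k2 : ℂ := q.2.2.2;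
      let K1 : ℤ := q.2.1; let K2 : ℤ := q.2.2.2;
      (m2 * k2 - m1 * k1 - 2 * m1 * k2) * A K1 K2 +
      (m2 * k2 - m1 * k1 + 2 * k1 * m2) * A K2 (-K1 - K2) +
      (m1 * k1 - m2 * k2) * A (-K1 - K2) K1 -
      (m2 * k2 - m1 * k1 + 2 * m1 * k2) * A (-K1) K2 -
      (m2 * k2 - m1 * k1 - 2 * k1 * m2) * A K2 (K1 - K2) -
      (m1 * k1 - m2 * k2) * A (K1 - K2) (-K1)) =
      ∑ q ∈ Iset n, (Pfun A q - Nfun A q) := by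
    refine Finset.sum_congr rfl (fun q _ => ?_)
    dsimp only
    simp only [Pfun, Nfun]
    ring
  -- Bijection 1 : {k₂ < k₁} → {m₂ < m₁}
  have b1 : ∑ q ∈ (Iset n).filter (fun q => q.2.2.2 < q.2.1), Nfun A q =
      ∑ q ∈ (Iset n).filter (fun q => q.2.2.1 < q.1), Pfun A q := by
    refine Finset.sum_nbij'
      (fun q => (q.1 + q.2.2.1, q.2.2.2, q.1, q.2.1 - q.2.2.2))
      (fun q => (q.2.2.1, q.2.1 + q.2.2.2, q.1 - q.2.2.1, q.2.1)) ?_ ?_ ?_ ?_ ?_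
    · rintro ⟨m1, k1, m2, k2⟩ hq
      rw [Finset.mem_filter, mem_Iset] at hq ⊢
      dsimp only at hq ⊢
      obtain ⟨⟨h1, h2, h3, h4, h5⟩, hlt⟩ := hq
      refine ⟨⟨by omega, by omega, by omega, by omega, ?_⟩, by omega⟩
      have h : k1 - k2 + k2 = k1 := by omega
      calc (m1 + m2) * k2 + m1 * (k1 - k2) = m1 * (k1 - k2 + k2) + m2 * k2 := by ring
        _ = n := by rw [h]; exact h5
    · rintro ⟨M1, K1, M2, K2⟩ hq
      rw [Finset.mem_filter, mem_Iset] at hq ⊢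
      dsimp only at hq ⊢
      obtain ⟨⟨h1, h2, h3, h4, h5⟩, hlt⟩ := hq
      refine ⟨⟨by omega, by omega, by omega, by omega, ?_⟩, by omega⟩
      have h : M1 - M2 + M2 = M1 := by omega
      calc M2 * (K1 + K2) + (M1 - M2) * K1 = (M1 - M2 + M2) * K1 + M2 * K2 := by ring
        _ = n := by rw [h]; exact h5
    · rintro ⟨m1, k1, m2, k2⟩ hq
      rw [Finset.mem_filter, mem_Iset] at hq
      dsimp only at hq
      dsimp only
      simp only [Prod.mk.injEq, true_and, and_true]
      omega
    · rintro ⟨M1, K1, M2, K2⟩ hq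
      rw [Finset.mem_filter, mem_Iset] at hq
      dsimp only at hq
      dsimp only
      simp only [Prod.mk.injEq, true_and, and_true]
      omega
    · rintro ⟨m1, k1, m2, k2⟩ hq
      rw [Finset.mem_filter, mem_Iset] at hq
      dsimp only at hq
      obtain ⟨⟨h1, h2, h3, h4, h5⟩, hlt⟩ := hq
      simp only [Pfun, Nfun]
      have hz : ((k1 - k2 : ℕ) : ℤ) = (k1 : ℤ) - k2 := by omega
      have hc : ((k1 - k2 : ℕ) : ℂ) = (k1 : ℂ) - k2 := Nat.cast_sub hlt.le
      rw [hz, hc]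
      rw [show (-(k2 : ℤ) - ((k1 : ℤ) - k2)) = -(k1 : ℤ) from by ring]
      push_cast
      ring
  -- Bijection 2 : {k₁ < k₂} → {m₁ < m₂}
  have b2 : ∑ q ∈ (Iset n).filter (fun q => q.2.1 < q.2.2.2), Nfun A q =
      ∑ q ∈ (Iset n).filter (fun q => q.1 < q.2.2.1), Pfun A q := by
    refine Finset.sum_nbij'
      (fun q => (q.2.2.1, q.2.2.2 - q.2.1, q.1 + q.2.2.1, q.2.1))
      (fun q => (q.2.2.1 - q.1, q.2.2.2, q.1, q.2.1 + q.2.2.2)) ?_ ?_ ?_ ?_ ?_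
    · rintro ⟨m1, k1, m2, k2⟩ hq
      rw [Finset.mem_filter, mem_Iset] at hq ⊢
      dsimp only at hq ⊢
      obtain ⟨⟨h1, h2, h3, h4, h5⟩, hlt⟩ := hq
      refine ⟨⟨by omega, by omega, by omega, by omega, ?_⟩, by omega⟩
      have h : k2 - k1 + k1 = k2 := by omega
      calc m2 * (k2 - k1) + (m1 + m2) * k1 = m1 * k1 + m2 * (k2 - k1 + k1) := by ring
        _ = n := by rw [h]; exact h5
    · rintro ⟨M1, K1, M2, K2⟩ hq
      rw [Finset.mem_filter, mem_Iset] at hq ⊢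
      dsimp only at hq ⊢
      obtain ⟨⟨h1, h2, h3, h4, h5⟩, hlt⟩ := hq
      refine ⟨⟨by omega, by omega, by omega, by omega, ?_⟩, by omega⟩
      have h : M2 - M1 + M1 = M2 := by omega
      calc (M2 - M1) * K2 + M1 * (K1 + K2) = M1 * K1 + (M2 - M1 + M1) * K2 := by ring
        _ = n := by rw [h]; exact h5
    · rintro ⟨m1, k1, m2, k2⟩ hq
      rw [Finset.mem_filter, mem_Iset] at hq
      dsimp only at hq
      dsimp only
      simp only [Prod.mk.injEq, true_and, and_true]
      omega
    · rintro ⟨M1, K1, M2, K2⟩ hq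
      rw [Finset.mem_filter, mem_Iset] at hq
      dsimp only at hq
      dsimp only
      simp only [Prod.mk.injEq, true_and, and_true]
      omega
    · rintro ⟨m1, k1, m2, k2⟩ hq
      rw [Finset.mem_filter, mem_Iset] at hq
      dsimp only at hq
      obtain ⟨⟨h1, h2, h3, h4, h5⟩, hlt⟩ := hq
      simp only [Pfun, Nfun]
      have hz : ((k2 - k1 : ℕ) : ℤ) = (k2 : ℤ) - k1 := by omega
      have hc : ((k2 - k1 : ℕ) : ℂ) = (k2 : ℂ) - k1 := Nat.cast_sub hlt.le
      rw [hz, hc]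
      rw [hA (-(k1 : ℤ)) (k2 : ℤ), hA (k2 : ℤ) ((k1 : ℤ) - k2), hA ((k1 : ℤ) - k2) (-(k1 : ℤ))]
      rw [show (-((k2 : ℤ) - k1) - k1) = -(k2 : ℤ) from by ring]
      simp only [neg_neg, neg_sub]
      push_cast
      ring
  -- Diagonal 1 : {m₁ = m₂} ≃ triples with m(k₁+k₂)=n
  have d1 : ∑ q ∈ (Iset n).filter (fun q => q.1 = q.2.2.1), Pfun A q =
      Finset.sum
        (((Finset.range (n + 1)) ×ˢ (Finset.range (n + 1)) ×ˢ
            (Finset.range (n + 1))).filter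
          (fun t => 0 < t.1 ∧ 0 < t.2.1 ∧ 0 < t.2.2 ∧ t.1 * (t.2.1 + t.2.2) = n))
        (fun t : ℕ × ℕ × ℕ =>
          let m1 : ℂ := t.1; let k1 : ℂ := t.2.1; let k2 : ℂ := t.2.2;
          let K1 : ℤ := t.2.1; let K2 : ℤ := t.2.2;
          -(n : ℂ) * A K1 K2 + (n : ℂ) * A K2 (-K1 - K2) +
            m1 * (k1 - k2) * A (-K1 - K2) K1) := by
    refine Finset.sum_nbij'
      (fun q => (q.1, q.2.1, q.2.2.2))
      (fun t => (t.1, t.2.1, t.1, t.2.2)) ?_ ?_ ?_ ?_ ?_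
    · rintro ⟨m1, k1, m2, k2⟩ hq
      rw [Finset.mem_filter, mem_Iset] at hq
      dsimp only at hq
      obtain ⟨⟨h1, h2, h3, h4, h5⟩, heq⟩ := hq
      subst heq
      simp only [Finset.mem_filter, Finset.mem_product, Finset.mem_range]
      refine ⟨⟨?_, ?_, ?_⟩, h1, h2, h4, by nlinarith⟩ <;> nlinarith
    · rintro ⟨m, k1, k2⟩ ht
      simp only [Finset.mem_filter, Finset.mem_product, Finset.mem_range] at ht
      obtain ⟨-, h1, h2, h3, h4⟩ := ht
      rw [Finset.mem_filter, mem_Iset]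
      exact ⟨⟨h1, h2, h1, h3, by nlinarith⟩, rfl⟩
    · rintro ⟨m1, k1, m2, k2⟩ hq
      rw [Finset.mem_filter, mem_Iset] at hq
      dsimp only at hq
      dsimp only
      simp only [Prod.mk.injEq, true_and, and_true]
      exact hq.2
    · rintro ⟨m, k1, k2⟩ ht
      rfl
    · rintro ⟨m1, k1, m2, k2⟩ hq
      rw [Finset.mem_filter, mem_Iset] at hq
      dsimp only at hq
      obtain ⟨⟨h1, h2, h3, h4, h5⟩, heq⟩ := hq
      subst heq
      simp only [Pfun]
      have hnn : (n : ℂ) = (m1 : ℂ) * k1 + (m1 : ℂ) * k2 := by exact_mod_cast h5.symm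
      rw [hnn]
      ring
  -- Diagonal 2 : {k₁ = k₂} ≃ triples with (m₁+m₂)k=n
  have d2 : ∑ q ∈ (Iset n).filter (fun q => q.2.1 = q.2.2.2), Nfun A q =
      Finset.sum
        (((Finset.range (n + 1)) ×ˢ (Finset.range (n + 1)) ×ˢ
            (Finset.range (n + 1))).filter
          (fun t => 0 < t.1 ∧ 0 < t.2.1 ∧ 0 < t.2.2 ∧ (t.1 + t.2.1) * t.2.2 = n))
        (fun t : ℕ × ℕ × ℕ =>
          let m1 : ℂ := t.1; let m2 : ℂ := t.2.1; let k1 : ℂ := t.2.2;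
          let K1 : ℤ := t.2.2;
          (n : ℂ) * A (-K1) K1 - (n : ℂ) * A K1 0 +
            (m1 - m2) * k1 * A 0 (-K1)) := by
    refine Finset.sum_nbij'
      (fun q => (q.1, q.2.2.1, q.2.1))
      (fun t => (t.1, t.2.2, t.2.1, t.2.2)) ?_ ?_ ?_ ?_ ?_
    · rintro ⟨m1, k1, m2, k2⟩ hq
      rw [Finset.mem_filter, mem_Iset] at hq
      dsimp only at hq
      obtain ⟨⟨h1, h2, h3, h4, h5⟩, heq⟩ := hq
      subst heq
      simp only [Finset.mem_filter, Finset.mem_product, Finset.mem_range]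
      refine ⟨⟨?_, ?_, ?_⟩, h1, h3, h2, by nlinarith⟩ <;> nlinarith
    · rintro ⟨m1, m2, k⟩ ht
      simp only [Finset.mem_filter, Finset.mem_product, Finset.mem_range] at ht
      obtain ⟨-, h1, h2, h3, h4⟩ := ht
      rw [Finset.mem_filter, mem_Iset]
      exact ⟨⟨h1, h3, h2, h3, by nlinarith⟩, rfl⟩
    · rintro ⟨m1, k1, m2, k2⟩ hq
      rw [Finset.mem_filter, mem_Iset] at hq
      dsimp only at hq
      dsimp only
      simp only [Prod.mk.injEq, true_and, and_true]
      exact hq.2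
    · rintro ⟨m1, m2, k⟩ ht
      rfl
    · rintro ⟨m1, k1, m2, k2⟩ hq
      rw [Finset.mem_filter, mem_Iset] at hq
      dsimp only at hq
      obtain ⟨⟨h1, h2, h3, h4, h5⟩, heq⟩ := hq
      subst heq
      simp only [Nfun]
      rw [sub_self]
      have hnn : (n : ℂ) = (m1 : ℂ) * k1 + (m2 : ℂ) * k1 := by exact_mod_cast h5.symm
      rw [hnn]
      ring
  rw [e0, Finset.sum_sub_distrib,
    three_split (Iset n) (Pfun A) (fun q => q.1) (fun q => q.2.2.1),
    three_split (Iset n) (Nfun A) (fun q => q.2.1) (fun q => q.2.2.2),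
    b1, b2, d1, d2]
  ring
end

section
/- For all positive integers d, l and every integer u, the following identities hold in ℚ: (i) Σ_{k=1}^{d} δ_{k ≡ u mod l} = d/l − {(d−u)/l} + {−u/l}; (ii) Σ_{k=1}^{d} (2k/d − 1)·δ_{k ≡ u mod l} = (l/d)·( {(d−u)/l}² − {(d−u)/l} − {−u/l}² + {−u/l} ) + ( 1 − {(d−u)/l} − {−u/l} ). -/
open scoped BigOperators

private lemma succ_ediv_aux (l : ℤ) (hl : 0 < l) (n : ℤ) :
    (n + 1) / l = n / l + if l ∣ n + 1 then 1 else 0 := by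
  split_ifs with h
  · obtain ⟨q, hq⟩ := h
    have hn : n = (l - 1) + l * (q - 1) := by linarith
    have hn1 : n + 1 = l * q := hq
    rw [hn1, hn, Int.mul_ediv_cancel_left _ hl.ne', Int.add_mul_ediv_left _ _ hl.ne',
      Int.ediv_eq_zero_of_lt (by linarith) (by linarith)]
    ring
  · have hr0 : 0 ≤ n % l := Int.emod_nonneg n hl.ne'
    have hrl : n % l < l := Int.emod_lt_of_pos n hl
    have hn : n = n % l + l * (n / l) := by rw [Int.emod_add_mul_ediv]
    have hne : n % l + 1 < l := by
      rcases lt_or_eq_of_le (by linarith : n % l + 1 ≤ l) with h' | h'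
      · exact h'
      · exact absurd ⟨n / l + 1, by linarith⟩ h
    have e1 : n + 1 = (n % l + 1) + l * (n / l) := by linarith
    rw [e1, Int.add_mul_ediv_left _ _ hl.ne',
      Int.ediv_eq_zero_of_lt (by linarith) hne]
    conv_rhs => rw [hn, Int.add_mul_ediv_left _ _ hl.ne',
      Int.ediv_eq_zero_of_lt hr0 hrl]
    simp

private lemma sums_aux (l : ℕ) (hl : 0 < l) (u : ℤ) (d : ℕ) :
    ((∑ k ∈ Finset.Icc 1 d,
        (if ((k : ℤ) : ZMod l) = (u : ZMod l) then (1 : ℚ) else 0)) =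
      (((((d : ℤ) - u) / (l : ℤ)) : ℤ) : ℚ) - ((((-u) / (l : ℤ)) : ℤ) : ℚ)) ∧
    ((∑ k ∈ Finset.Icc 1 d,
        (k : ℚ) * (if ((k : ℤ) : ZMod l) = (u : ZMod l) then (1 : ℚ) else 0)) =
      (u : ℚ) * ((((((d : ℤ) - u) / (l : ℤ)) : ℤ) : ℚ) - ((((-u) / (l : ℤ)) : ℤ) : ℚ)) +
        (l : ℚ) * (((((((d : ℤ) - u) / (l : ℤ)) : ℤ) : ℚ)) * (((((((d : ℤ) - u) / (l : ℤ)) : ℤ) : ℚ)) + 1) -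
          (((((-u) / (l : ℤ)) : ℤ) : ℚ)) * ((((((-u) / (l : ℤ)) : ℤ) : ℚ)) + 1)) / 2) := by
  have hlz : (0 : ℤ) < (l : ℤ) := by exact_mod_cast hl
  induction d with
  | zero => simp
  | succ d ih =>
    set a : ℤ := (-u) / (l : ℤ) with ha
    set b : ℤ := ((d : ℤ) - u) / (l : ℤ) with hb
    have hstep : (((d : ℕ) + 1 : ℕ) : ℤ) - u = ((d : ℤ) - u) + 1 := by push_cast; ring
    have hcond : ((((d + 1 : ℕ) : ℤ)) : ZMod l) = (u : ZMod l) ↔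
        (l : ℤ) ∣ ((d : ℤ) - u) + 1 := by
      rw [ZMod.intCast_eq_intCast_iff, Int.modEq_iff_dvd, dvd_sub_comm]
      constructor <;> intro h <;> [skip; skip] <;>
        · obtain ⟨c, hc⟩ := h; exact ⟨c, by push_cast at hc ⊢; linarith⟩
    have hB : (((d + 1 : ℕ) : ℤ) - u) / (l : ℤ) =
        b + if (l : ℤ) ∣ ((d : ℤ) - u) + 1 then 1 else 0 := by
      rw [hstep, succ_ediv_aux _ hlz]
    have hsum1 := Finset.sum_Icc_succ_top (by omega : 1 ≤ d + 1)
      (fun k => (if ((k : ℤ) : ZMod l) = (u : ZMod l) then (1 : ℚ) else 0))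
    have hsum2 := Finset.sum_Icc_succ_top (by omega : 1 ≤ d + 1)
      (fun k => (k : ℚ) * (if ((k : ℤ) : ZMod l) = (u : ZMod l) then (1 : ℚ) else 0))
    by_cases hdvd : (l : ℤ) ∣ ((d : ℤ) - u) + 1
    · have hBe : (((d + 1 : ℕ) : ℤ) - u) / (l : ℤ) = b + 1 := by
        rw [hB, if_pos hdvd]
      have hq : (((d : ℤ) - u) + 1) = (l : ℤ) * (b + 1) := by
        conv_lhs => rw [← Int.ediv_mul_cancel hdvd]
        rw [show ((d : ℤ) - u + 1) / (l : ℤ) = b + 1 from by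
          rw [succ_ediv_aux _ hlz, if_pos hdvd]]
        ring
      have hqQ : ((d : ℚ) + 1) = (u : ℚ) + (l : ℚ) * ((b : ℚ) + 1) := by
        exact_mod_cast congrArg (fun x : ℤ => (x : ℚ)) (by linarith : ((d : ℤ) + 1) = u + (l : ℤ) * (b + 1))
      constructor
      · rw [hsum1, if_pos (hcond.mpr hdvd), ih.1, hBe]
        push_cast
        ring
      · rw [hsum2, if_pos (hcond.mpr hdvd), hBe]
        push_cast
        push_cast at ih
        linear_combination ih.2 + hqQ
    · have hBe : (((d + 1 : ℕ) : ℤ) - u) / (l : ℤ) = b := by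
        rw [hB, if_neg hdvd, add_zero]
      constructor
      · rw [hsum1, if_neg (fun h => hdvd (hcond.mp h)), hBe, add_zero]
        exact ih.1
      · rw [hsum2, if_neg (fun h => hdvd (hcond.mp h)), hBe, mul_zero, add_zero]
        exact ih.2

theorem stmt14 (d l : ℕ) (hd : 0 < d) (hl : 0 < l) (u : ℤ) :
    (∑ k ∈ Finset.Icc 1 d,
        (if ((k : ℤ) : ZMod l) = (u : ZMod l) then (1 : ℚ) else 0)) =
      (d : ℚ) / (l : ℚ) - Int.fract (((d : ℚ) - (u : ℚ)) / (l : ℚ)) +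
        Int.fract ((-(u : ℚ)) / (l : ℚ)) ∧
    (∑ k ∈ Finset.Icc 1 d,
        (2 * (k : ℚ) / (d : ℚ) - 1) *
          (if ((k : ℤ) : ZMod l) = (u : ZMod l) then (1 : ℚ) else 0)) =
      ((l : ℚ) / (d : ℚ)) *
          (Int.fract (((d : ℚ) - (u : ℚ)) / (l : ℚ)) ^ 2 -
            Int.fract (((d : ℚ) - (u : ℚ)) / (l : ℚ)) -
            Int.fract ((-(u : ℚ)) / (l : ℚ)) ^ 2 +
            Int.fract ((-(u : ℚ)) / (l : ℚ))) +
        (1 - Int.fract (((d : ℚ) - (u : ℚ)) / (l : ℚ)) -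
          Int.fract ((-(u : ℚ)) / (l : ℚ))) := by
  obtain ⟨h1, h2⟩ := sums_aux l hl u d
  set a : ℤ := (-u) / (l : ℤ) with ha
  set b : ℤ := ((d : ℤ) - u) / (l : ℤ) with hb
  have hl0 : (l : ℚ) ≠ 0 := by positivity
  have hd0 : (d : ℚ) ≠ 0 := by positivity
  have hF : Int.fract (((d : ℚ) - (u : ℚ)) / (l : ℚ)) =
      ((d : ℚ) - (u : ℚ)) / (l : ℚ) - (b : ℚ) := by
    rw [Int.fract]
    congr 1
    rw [show ((d : ℚ) - (u : ℚ)) = ((((d : ℤ) - u) : ℤ) : ℚ) by push_cast; ring]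
    exact_mod_cast Rat.floor_intCast_div_natCast ((d : ℤ) - u) l
  have hf : Int.fract ((-(u : ℚ)) / (l : ℚ)) = (-(u : ℚ)) / (l : ℚ) - (a : ℚ) := by
    rw [Int.fract]
    congr 1
    rw [show (-(u : ℚ)) = (((-u) : ℤ) : ℚ) by push_cast; ring]
    exact_mod_cast Rat.floor_intCast_div_natCast (-u) l
  constructor
  · rw [h1, hF, hf]
    field_simp
    ring
  · have h3 : (∑ k ∈ Finset.Icc 1 d,
        (2 * (k : ℚ) / (d : ℚ) - 1) *
          (if ((k : ℤ) : ZMod l) = (u : ZMod l) then (1 : ℚ) else 0)) =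
        (2 / (d : ℚ)) * (∑ k ∈ Finset.Icc 1 d,
          (k : ℚ) * (if ((k : ℤ) : ZMod l) = (u : ZMod l) then (1 : ℚ) else 0)) -
        (∑ k ∈ Finset.Icc 1 d,
          (if ((k : ℤ) : ZMod l) = (u : ZMod l) then (1 : ℚ) else 0)) := by
      rw [Finset.mul_sum, ← Finset.sum_sub_distrib]
      refine Finset.sum_congr rfl fun k _ => ?_
      ring
    rw [h3, h1, h2, hF, hf]
    field_simp
    ring
end

section
/- Let n ≥ 1 be an integer. Then: (i) the map (a,b,c,d) ↦ (a, d−c, a−b, c) is a bijection from {(a,b,c,d) ∈ H(n) : c > 0} onto {(m₁,k₁,m₂,k₂) ∈ I(n) : m₁ ≥ m₂}; (ii) the map (a,b,c,d) ↦ (a−b, c, a, d−c) is a bijection from {(a,b,c,d) ∈ H(n) : b > 0 and c > 0} onto {(m₁,k₁,m₂,k₂) ∈ I(n) : m₁ < m₂}; (iii) the map (a,b,c,d) ↦ (a−b, d, b, d−c) is a bijection from {(a,b,c,d) ∈ H(n) : b > 0 and c > 0} onto {(m₁,k₁,m₂,k₂) ∈ I(n) : k₁ > k₂}; (iv) the map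 (a,b,c,d) ↦ (b, d−c, a−b, d) is a bijection from {(a,b,c,d) ∈ H(n) : b > 0} onto {(m₁,k₁,m₂,k₂) ∈ I(n) : k₁ ≤ k₂}. -/
/-- `I(n)`: quadruples `(m₁,k₁,m₂,k₂)` of positive integers with `m₁k₁ + m₂k₂ = n`. -/
def ISet (n : ℤ) : Set (ℤ × ℤ × ℤ × ℤ) :=
  {q | 0 < q.1 ∧ 0 < q.2.1 ∧ 0 < q.2.2.1 ∧ 0 < q.2.2.2 ∧
    q.1 * q.2.1 + q.2.2.1 * q.2.2.2 = n}

/-- `H(n)`: quadruples `(a,b,c,d)` of integers with `ad − bc = n`, `a > b ≥ 0`, `d > c ≥ 0`. -/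
def HSet (n : ℤ) : Set (ℤ × ℤ × ℤ × ℤ) :=
  {q | q.1 * q.2.2.2 - q.2.1 * q.2.2.1 = n ∧ q.2.1 < q.1 ∧ 0 ≤ q.2.1 ∧
    q.2.2.1 < q.2.2.2 ∧ 0 ≤ q.2.2.1}

theorem stmt15 (n : ℤ) (hn : 1 ≤ n) :
    Set.BijOn (fun q : ℤ × ℤ × ℤ × ℤ => (q.1, q.2.2.2 - q.2.2.1, q.1 - q.2.1, q.2.2.1))
      {q ∈ HSet n | 0 < q.2.2.1} {q ∈ ISet n | q.2.2.1 ≤ q.1} ∧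
    Set.BijOn (fun q : ℤ × ℤ × ℤ × ℤ => (q.1 - q.2.1, q.2.2.1, q.1, q.2.2.2 - q.2.2.1))
      {q ∈ HSet n | 0 < q.2.1 ∧ 0 < q.2.2.1} {q ∈ ISet n | q.1 < q.2.2.1} ∧
    Set.BijOn (fun q : ℤ × ℤ × ℤ × ℤ => (q.1 - q.2.1, q.2.2.2, q.2.1, q.2.2.2 - q.2.2.1))
      {q ∈ HSet n | 0 < q.2.1 ∧ 0 < q.2.2.1} {q ∈ ISet n | q.2.2.2 < q.2.1} ∧
    Set.BijOn (fun q : ℤ × ℤ × ℤ × ℤ => (q.2.1, q.2.2.2 - q.2.2.1, q.1 - q.2.1, q.2.2.2))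
      {q ∈ HSet n | 0 < q.2.1} {q ∈ ISet n | q.2.1 ≤ q.2.2.2} := by
  refine ⟨?_, ?_, ?_, ?_⟩
  · apply Set.InvOn.bijOn
      (f' := fun q : ℤ × ℤ × ℤ × ℤ => (q.1, q.1 - q.2.2.1, q.2.2.2, q.2.1 + q.2.2.2))
    · constructor
      · rintro ⟨a, b, c, d⟩ -
        simp only [Prod.mk.injEq, true_and, and_true]; omega
      · rintro ⟨m1, k1, m2, k2⟩ -
        simp only [Prod.mk.injEq, true_and, and_true]; omega
    · rintro ⟨a, b, c, d⟩ hq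
      simp only [ISet, HSet, Set.mem_sep_iff, Set.mem_setOf_eq] at hq ⊢
      obtain ⟨⟨h1, h2, h3, h4, h5⟩, h6⟩ := hq
      exact ⟨⟨by omega, by omega, by omega, by omega, by linear_combination h1⟩, by omega⟩
    · rintro ⟨m1, k1, m2, k2⟩ hq
      simp only [ISet, HSet, Set.mem_sep_iff, Set.mem_setOf_eq] at hq ⊢
      obtain ⟨⟨h1, h2, h3, h4, h5⟩, h6⟩ := hq
      exact ⟨⟨by linear_combination h5, by omega, by omega, by omega, by omega⟩, by omega⟩
  · apply Set.InvOn.bijOn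
      (f' := fun q : ℤ × ℤ × ℤ × ℤ => (q.2.2.1, q.2.2.1 - q.1, q.2.1, q.2.2.2 + q.2.1))
    · constructor
      · rintro ⟨a, b, c, d⟩ -
        simp only [Prod.mk.injEq, true_and, and_true]; omega
      · rintro ⟨m1, k1, m2, k2⟩ -
        simp only [Prod.mk.injEq, true_and, and_true]; omega
    · rintro ⟨a, b, c, d⟩ hq
      simp only [ISet, HSet, Set.mem_sep_iff, Set.mem_setOf_eq] at hq ⊢
      obtain ⟨⟨h1, h2, h3, h4, h5⟩, h6, h7⟩ := hq
      exact ⟨⟨by omega, by omega, by omega, by omega, by linear_combination h1⟩, by omega⟩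
    · rintro ⟨m1, k1, m2, k2⟩ hq
      simp only [ISet, HSet, Set.mem_sep_iff, Set.mem_setOf_eq] at hq ⊢
      obtain ⟨⟨h1, h2, h3, h4, h5⟩, h6⟩ := hq
      exact ⟨⟨by linear_combination h5, by omega, by omega, by omega, by omega⟩, by omega, by omega⟩
  · apply Set.InvOn.bijOn
      (f' := fun q : ℤ × ℤ × ℤ × ℤ => (q.1 + q.2.2.1, q.2.2.1, q.2.1 - q.2.2.2, q.2.1))
    · constructor
      · rintro ⟨a, b, c, d⟩ -
        simp only [Prod.mk.injEq, true_and, and_true]; omega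
      · rintro ⟨m1, k1, m2, k2⟩ -
        simp only [Prod.mk.injEq, true_and, and_true]; omega
    · rintro ⟨a, b, c, d⟩ hq
      simp only [ISet, HSet, Set.mem_sep_iff, Set.mem_setOf_eq] at hq ⊢
      obtain ⟨⟨h1, h2, h3, h4, h5⟩, h6, h7⟩ := hq
      exact ⟨⟨by omega, by omega, by omega, by omega, by linear_combination h1⟩, by omega⟩
    · rintro ⟨m1, k1, m2, k2⟩ hq
      simp only [ISet, HSet, Set.mem_sep_iff, Set.mem_setOf_eq] at hq ⊢
      obtain ⟨⟨h1, h2, h3, h4, h5⟩, h6⟩ := hq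
      exact ⟨⟨by linear_combination h5, by omega, by omega, by omega, by omega⟩, by omega, by omega⟩
  · apply Set.InvOn.bijOn
      (f' := fun q : ℤ × ℤ × ℤ × ℤ => (q.1 + q.2.2.1, q.1, q.2.2.2 - q.2.1, q.2.2.2))
    · constructor
      · rintro ⟨a, b, c, d⟩ -
        simp only [Prod.mk.injEq, true_and, and_true]; omega
      · rintro ⟨m1, k1, m2, k2⟩ -
        simp only [Prod.mk.injEq, true_and, and_true]; omega
    · rintro ⟨a, b, c, d⟩ hq
      simp only [ISet, HSet, Set.mem_sep_iff, Set.mem_setOf_eq] at hq ⊢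
      obtain ⟨⟨h1, h2, h3, h4, h5⟩, h6⟩ := hq
      exact ⟨⟨by omega, by omega, by omega, by omega, by linear_combination h1⟩, by omega⟩
    · rintro ⟨m1, k1, m2, k2⟩ hq
      simp only [ISet, HSet, Set.mem_sep_iff, Set.mem_setOf_eq] at hq ⊢
      obtain ⟨⟨h1, h2, h3, h4, h5⟩, h6⟩ := hq
      exact ⟨⟨by linear_combination h5, by omega, by omega, by omega, by omega⟩, by omega⟩
end
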